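/- If D is an uncountable set of ordinals all lying in lim(C_{θ'}) for a fixed θ' with coherent club sequence (C_α), then any two elements α < β of D satisfy α ∈ lim(C_β); consequently any function f : D → ω must take the same value on two <_T-comparable elements (pigeonhole), so no specializing function on D exists. -/

import Mathlib

open Set

/-- `β` is a limit point of the set of ordinals `C`. -/
def IsLimPt (C : Set Ordinal) (β : Ordinal) : Prop :=
  0 < β ∧ sSup (C ∩ Iio β) = β

theorem isLimPt_inter_Iio_iff {C : Set Ordinal} {α β : Ordinal} (h : α ≤ β) :
    IsLimPt (C ∩ Iio β) α ↔ IsLimPt C α := by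
  rw [IsLimPt, IsLimPt, inter_assoc, Iio_inter_Iio, inf_eq_right.mpr h]

theorem isLimPt_of_coherent {θ : Ordinal} {C : Ordinal → Set Ordinal}
    (hcoh : ∀ β < θ, IsLimPt (C θ) β → C β = C θ ∩ Iio β)
    {α β : Ordinal} (hαβ : α < β) (hβθ : β < θ) (hα : IsLimPt (C θ) α)
    (hβ : IsLimPt (C θ) β) : IsLimPt (C β) α := by
  rwa [hcoh β hβθ hβ, isLimPt_inter_Iio_iff hαβ.le]

theorem Set.exists_lt_map_eq_of_not_countable {α β : Type*} [LinearOrder α] [Countable β]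
    {s : Set α} (hs : ¬ s.Countable) (f : α → β) :
    ∃ a ∈ s, ∃ b ∈ s, a < b ∧ f a = f b := by
  by_contra! h
  refine hs ((mapsTo_univ f s).countable_of_injOn ?_ countable_univ)
  intro a ha b hb hab
  by_contra hne
  rcases lt_or_gt_of_ne hne with hlt | hlt
  · exact h a ha b hb hlt hab
  · exact h b hb a ha hlt hab.symm

theorem stmt6_general (θ' : Ordinal) (Γ : Set Ordinal) (C : Ordinal → Set Ordinal)
    (hθ' : θ' ∈ Γ)
    (hcoh : ∀ α ∈ Γ, ∀ β, β < α → IsLimPt (C α) β →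
      β ∈ Γ ∧ C β = C α ∩ Iio β)
    (D : Set Ordinal)
    (hDlim : ∀ α ∈ D, α < θ' ∧ IsLimPt (C θ') α)
    (hunc : ¬ D.Countable) :
    (∀ α ∈ D, ∀ β ∈ D, α < β → IsLimPt (C β) α) ∧
    (∀ f : Ordinal → ℕ, ∃ α ∈ D, ∃ β ∈ D, α < β ∧ IsLimPt (C β) α ∧ f α = f β) ∧
    ¬ ∃ f : Ordinal → ℕ,
        ∀ α ∈ D, ∀ β ∈ D, α < β → IsLimPt (C β) α → f α ≠ f β := by
  have htree : ∀ α ∈ D, ∀ β ∈ D, α < β → IsLimPt (C β) α := fun α hα β hβ hαβ =>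
    isLimPt_of_coherent (fun β hβ hlim => (hcoh θ' hθ' β hβ hlim).2) hαβ
      (hDlim β hβ).1 (hDlim α hα).2 (hDlim β hβ).2
  have hcollide : ∀ f : Ordinal → ℕ,
      ∃ α ∈ D, ∃ β ∈ D, α < β ∧ IsLimPt (C β) α ∧ f α = f β := fun f => by
    obtain ⟨α, hα, β, hβ, hαβ, hf⟩ := exists_lt_map_eq_of_not_countable hunc f
    exact ⟨α, hα, β, hβ, hαβ, htree α hα β hβ hαβ, hf⟩
  refine ⟨htree, hcollide, ?_⟩
  rintro ⟨f, hf⟩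
  obtain ⟨α, hα, β, hβ, hαβ, hlim, hfαβ⟩ := hcollide f
  exact hf α hα β hβ hαβ hlim hfαβ

/-- if D is an uncountable set of ordinals all lying in
lim(C_{θ'}), then any two elements α < β of D satisfy α ∈ lim(C_β), and any
f : D → ω takes the same value on two <_T-comparable elements; hence no
specializing function on D exists. -/
theorem stmt6 (θ' : Ordinal) (Γ : Set Ordinal) (C : Ordinal → Set Ordinal)
    (hθ' : θ' ∈ Γ)
    (hCsub : ∀ α ∈ Γ, C α ⊆ Iio α)
    (hcoh : ∀ α ∈ Γ, ∀ β, β < α → IsLimPt (C α) β →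
      β ∈ Γ ∧ C β = C α ∩ Iio β)
    (D : Set Ordinal)
    (hDlim : ∀ α ∈ D, α < θ' ∧ IsLimPt (C θ') α)
    (hunc : ¬ D.Countable) :
    (∀ α ∈ D, ∀ β ∈ D, α < β → IsLimPt (C β) α) ∧
    (∀ f : Ordinal → ℕ, ∃ α ∈ D, ∃ β ∈ D, α < β ∧ IsLimPt (C β) α ∧ f α = f β) ∧
    ¬ ∃ f : Ordinal → ℕ,
        ∀ α ∈ D, ∀ β ∈ D, α < β → IsLimPt (C β) α → f α ≠ f β :=
  stmt6_general θ' Γ C hθ' hcoh D hDlim hunc
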